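/- arXiv:1709.03911 — 2 statements merged into one kernel-verified Lean document; each statement's English description precedes it below -/
import Mathlib

section
/- Let A and B be positive self-adjoint operators on Hilbert spaces X and Y respectively, and T : X → Y a bounded operator with T(Dom A) ⊆ Dom B such that ‖T x‖ ≤ C₀ ‖x‖ for all x and ‖B T x‖ ≤ C₁ ‖A x‖ for all x ∈ Dom A. Then for every λ ∈ [0,1] and all x ∈ Dom(A^λ), ‖B^λ T x‖ ≤ C₀^{1−λ} C₁^{λ} ‖A^λ x‖ (Heinz–Kato inequality). -/
/-!
For strictly positive `a`, `b`, write `a = exp La` and `b = exp Lb` with `La = log a`,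
`Lb = log b` self-adjoint. The operator-valued function `z ↦ exp (z Lb) T exp (-z La)` is entire
and bounded on the strip `0 ≤ re z ≤ 1`, because `exp (i t L)` is unitary for real `t`. For the
same reason its norm is at most `C₀` on `re z = 0`, and at most `C₁` on `re z = 1`, where
`‖exp (z Lb) T exp (-z La) v‖ = ‖b T w‖ ≤ C₁ ‖a w‖ = C₁ ‖v‖` for `w = exp (-z La) v`.
Hadamard's three lines theorem gives the bound `C₀ ^ (1 - λ) C₁ ^ λ` at `z = λ`, which is the
inequality for `a` and `b`. Positive `A`, `B` are reduced to this case by passing to `A + δ` and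
`B + δ²`, which satisfy the hypotheses with `C₁ + δ C₀` in place of `C₁`, and letting `δ → 0`.
-/

open Complex
open scoped InnerProductSpace

section BanachAlgebra

variable {𝔸 : Type*} [NormedRing 𝔸] [NormedAlgebra ℂ 𝔸] [CompleteSpace 𝔸]

theorem exp_smul_mul_exp_smul (a : 𝔸) (z w : ℂ) :
    NormedSpace.exp (z • a) * NormedSpace.exp (w • a) = NormedSpace.exp ((z + w) • a) := by
  let _ : NormedAlgebra ℚ 𝔸 := .restrictScalars ℚ ℂ 𝔸
  rw [← NormedSpace.exp_add_of_commute (((Commute.refl a).smul_left z).smul_right w), add_smul]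

theorem IsSelfAdjoint.exp_ofReal_mul_I_smul_mem_unitary [StarRing 𝔸] [ContinuousStar 𝔸]
    [StarModule ℂ 𝔸] {a : 𝔸} (ha : IsSelfAdjoint a) (t : ℝ) :
    NormedSpace.exp (((t : ℂ) * I) • a) ∈ unitary 𝔸 := by
  let _ : NormedAlgebra ℚ 𝔸 := .restrictScalars ℚ ℂ 𝔸
  refine NormedSpace.exp_mem_unitary_of_mem_skewAdjoint (ha.smul_mem_skewAdjoint ?_)
  simp [skewAdjoint.mem_iff]

end BanachAlgebra

section Hilbert

variable {H : Type*} [NormedAddCommGroup H] [InnerProductSpace ℂ H] [CompleteSpace H]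
  {L : H →L[ℂ] H}

theorem IsSelfAdjoint.norm_exp_smul_apply (hL : IsSelfAdjoint L) (z : ℂ) (v : H) :
    ‖NormedSpace.exp (z • L) v‖ = ‖NormedSpace.exp ((z.re : ℂ) • L) v‖ := by
  conv_lhs => rw [← re_add_im z, add_comm, ← exp_smul_mul_exp_smul]
  exact ContinuousLinearMap.norm_map_of_mem_unitary
    (hL.exp_ofReal_mul_I_smul_mem_unitary z.im) _

theorem IsSelfAdjoint.norm_exp_smul_apply_of_re_eq_zero (hL : IsSelfAdjoint L) {z : ℂ}
    (hz : z.re = 0) (v : H) : ‖NormedSpace.exp (z • L) v‖ = ‖v‖ := by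
  rw [hL.norm_exp_smul_apply, hz, ofReal_zero, zero_smul, NormedSpace.exp_zero,
    one_apply_eq_self]

theorem IsSelfAdjoint.exists_norm_exp_smul_le (hL : IsSelfAdjoint L) (a b : ℝ) :
    ∃ M, ∀ z : ℂ, z.re ∈ Set.Icc a b → ‖NormedSpace.exp (z • L)‖ ≤ M := by
  let _ : NormedAlgebra ℚ (H →L[ℂ] H) := .restrictScalars ℚ ℂ _
  obtain ⟨M, hM⟩ := isCompact_Icc.exists_bound_of_continuousOn
    (f := fun s : ℝ => NormedSpace.exp ((s : ℂ) • L))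
    (NormedSpace.exp_continuous.comp (by fun_prop)).continuousOn
  refine ⟨M, fun z hz => le_trans ?_ (hM _ hz)⟩
  refine ContinuousLinearMap.opNorm_le_bound _ (norm_nonneg _) fun v => ?_
  rw [hL.norm_exp_smul_apply]
  exact ContinuousLinearMap.le_opNorm _ _

end Hilbert

section ThreeLines

open Complex.HadamardThreeLines

variable {X Y : Type*} [NormedAddCommGroup X] [InnerProductSpace ℂ X] [CompleteSpace X]
  [NormedAddCommGroup Y] [InnerProductSpace ℂ Y] [CompleteSpace Y]
  {La : X →L[ℂ] X} {Lb : Y →L[ℂ] Y} {T : X →L[ℂ] Y}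

noncomputable def expSandwich (La : X →L[ℂ] X) (Lb : Y →L[ℂ] Y) (T : X →L[ℂ] Y) (z : ℂ) :
    X →L[ℂ] Y :=
  NormedSpace.exp (z • Lb) ∘L T ∘L NormedSpace.exp (-z • La)

theorem differentiable_expSandwich : Differentiable ℂ (expSandwich La Lb T) := by
  have hLa : Differentiable ℂ fun z : ℂ => NormedSpace.exp (-z • La) :=
    (differentiable_exp_smul_const (𝕂 := ℂ) La).comp differentiable_neg
  exact (differentiable_exp_smul_const (𝕂 := ℂ) Lb).clm_comp
    ((differentiable_const T).clm_comp hLa)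

theorem bddAbove_norm_expSandwich (hLa : IsSelfAdjoint La) (hLb : IsSelfAdjoint Lb) :
    BddAbove ((norm ∘ expSandwich La Lb T) '' verticalClosedStrip 0 1) := by
  obtain ⟨Ma, hMa⟩ := hLa.exists_norm_exp_smul_le (-1) 0
  obtain ⟨Mb, hMb⟩ := hLb.exists_norm_exp_smul_le 0 1
  refine ⟨Mb * (‖T‖ * Ma), ?_⟩
  rintro - ⟨z, ⟨hz₀, hz₁⟩, rfl⟩
  have hMb' := hMb z ⟨hz₀, hz₁⟩
  have hMa' := hMa (-z) ⟨by simp [hz₁], by simp [hz₀]⟩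
  calc ‖expSandwich La Lb T z‖
      ≤ ‖NormedSpace.exp (z • Lb)‖ * (‖T‖ * ‖NormedSpace.exp (-z • La)‖) :=
        (ContinuousLinearMap.opNorm_comp_le _ _).trans
          (mul_le_mul_of_nonneg_left (ContinuousLinearMap.opNorm_comp_le _ _) (norm_nonneg _))
    _ ≤ Mb * (‖T‖ * Ma) := by gcongr; exact (norm_nonneg _).trans hMb'

theorem norm_expSandwich_le_of_re_eq_zero (hLa : IsSelfAdjoint La) (hLb : IsSelfAdjoint Lb)
    {C₀ : ℝ} (hC₀ : 0 ≤ C₀) (hT : ∀ v, ‖T v‖ ≤ C₀ * ‖v‖) {z : ℂ} (hz : z.re = 0) :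
    ‖expSandwich La Lb T z‖ ≤ C₀ := by
  refine ContinuousLinearMap.opNorm_le_bound _ hC₀ fun v => ?_
  have hz' : (-z).re = 0 := by rw [neg_re, hz, neg_zero]
  calc ‖expSandwich La Lb T z v‖ = ‖T (NormedSpace.exp (-z • La) v)‖ :=
        hLb.norm_exp_smul_apply_of_re_eq_zero hz _
    _ ≤ C₀ * ‖v‖ := by
        rw [← hLa.norm_exp_smul_apply_of_re_eq_zero hz' v]
        exact hT _

theorem norm_expSandwich_le_of_re_eq_one (hLa : IsSelfAdjoint La) (hLb : IsSelfAdjoint Lb)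
    {C₁ : ℝ} (hC₁ : 0 ≤ C₁)
    (hbT : ∀ v, ‖NormedSpace.exp Lb (T v)‖ ≤ C₁ * ‖NormedSpace.exp La v‖)
    {z : ℂ} (hz : z.re = 1) :
    ‖expSandwich La Lb T z‖ ≤ C₁ := by
  refine ContinuousLinearMap.opNorm_le_bound _ hC₁ fun v => ?_
  have hz' : (z - 1).re = 0 := by rw [sub_re, hz, one_re, sub_self]
  have hz'' : (1 - z).re = 0 := by rw [sub_re, hz, one_re, sub_self]
  have hb := exp_smul_mul_exp_smul Lb (z - 1) 1
  rw [sub_add_cancel, one_smul] at hb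
  have ha := exp_smul_mul_exp_smul La 1 (-z)
  rw [← sub_eq_add_neg, one_smul] at ha
  calc ‖expSandwich La Lb T z v‖ = ‖NormedSpace.exp Lb (T (NormedSpace.exp (-z • La) v))‖ := by
        simp only [expSandwich, ContinuousLinearMap.comp_apply, ← hb, mul_apply_eq_comp,
          hLb.norm_exp_smul_apply_of_re_eq_zero hz']
    _ ≤ C₁ * ‖NormedSpace.exp La (NormedSpace.exp (-z • La) v)‖ := hbT _
    _ = C₁ * ‖v‖ := by
        rw [← mul_apply_eq_comp, ha, hLa.norm_exp_smul_apply_of_re_eq_zero hz'']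

theorem norm_expSandwich_le_interp (hLa : IsSelfAdjoint La) (hLb : IsSelfAdjoint Lb)
    {C₀ C₁ : ℝ} (hC₀ : 0 ≤ C₀) (hC₁ : 0 ≤ C₁) (hT : ∀ v, ‖T v‖ ≤ C₀ * ‖v‖)
    (hbT : ∀ v, ‖NormedSpace.exp Lb (T v)‖ ≤ C₁ * ‖NormedSpace.exp La v‖)
    {lam : ℝ} (hlam : lam ∈ Set.Icc (0 : ℝ) 1) :
    ‖expSandwich La Lb T lam‖ ≤ C₀ ^ (1 - lam) * C₁ ^ lam := by
  have hmem : (lam : ℂ) ∈ verticalClosedStrip 0 1 := by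
    rwa [verticalClosedStrip, Set.mem_preimage, ofReal_re]
  have h := norm_le_interp_of_mem_verticalClosedStrip' zero_lt_one hmem
    differentiable_expSandwich.diffContOnCl (bddAbove_norm_expSandwich hLa hLb)
    (fun z hz => norm_expSandwich_le_of_re_eq_zero hLa hLb hC₀ hT hz)
    (fun z hz => norm_expSandwich_le_of_re_eq_one hLa hLb hC₁ hbT hz)
  rwa [ofReal_re, sub_zero, sub_zero, div_one] at h

end ThreeLines

section StrictlyPositive

variable {X Y : Type*} [NormedAddCommGroup X] [InnerProductSpace ℂ X] [CompleteSpace X]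
  [NormedAddCommGroup Y] [InnerProductSpace ℂ Y] [CompleteSpace Y]

theorem exp_ofReal_smul_log {a : X →L[ℂ] X} (ha : IsStrictlyPositive a) (lam : ℝ) :
    NormedSpace.exp ((lam : ℂ) • CFC.log a) = cfc (fun t : ℝ => t ^ lam) a := by
  have hspec : ∀ t ∈ spectrum ℝ a, 0 < t :=
    ((StarOrderedRing.isStrictlyPositive_iff_spectrum_pos a ha.isSelfAdjoint).mp ha)
  have hlog : ContinuousOn Real.log (spectrum ℝ a) :=
    Real.continuousOn_log.mono fun t ht => (hspec t ht).ne'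
  rw [Complex.coe_smul, CFC.log, ← cfc_const_mul lam Real.log a hlog,
    ← CFC.real_exp_eq_normedSpace_exp (cfc_predicate _ a),
    ← cfc_comp' Real.exp (fun t : ℝ => lam * Real.log t) a Real.continuous_exp.continuousOn]
  exact cfc_congr fun t ht => by rw [Real.rpow_def_of_pos (hspec t ht), mul_comm]

theorem norm_cfc_rpow_apply_le_of_isStrictlyPositive {a : X →L[ℂ] X} {b : Y →L[ℂ] Y}
    (ha : IsStrictlyPositive a) (hb : IsStrictlyPositive b) {T : X →L[ℂ] Y} {C₀ C₁ : ℝ}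
    (hC₀ : 0 ≤ C₀) (hC₁ : 0 ≤ C₁) (hT : ∀ v, ‖T v‖ ≤ C₀ * ‖v‖)
    (hbT : ∀ v, ‖b (T v)‖ ≤ C₁ * ‖a v‖) {lam : ℝ} (hlam : lam ∈ Set.Icc (0 : ℝ) 1) (x : X) :
    ‖cfc (fun t : ℝ => t ^ lam) b (T x)‖ ≤
      C₀ ^ (1 - lam) * C₁ ^ lam * ‖cfc (fun t : ℝ => t ^ lam) a x‖ := by
  set La := CFC.log a
  set Lb := CFC.log b
  have hbT' : ∀ v, ‖NormedSpace.exp Lb (T v)‖ ≤ C₁ * ‖NormedSpace.exp La v‖ := by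
    simpa only [La, Lb, CFC.exp_log a ha, CFC.exp_log b hb] using hbT
  have hsandwich : cfc (fun t : ℝ => t ^ lam) b (T x) =
      expSandwich La Lb T lam (cfc (fun t : ℝ => t ^ lam) a x) := by
    have hinv := exp_smul_mul_exp_smul La (-(lam : ℂ)) lam
    rw [neg_add_cancel, zero_smul, NormedSpace.exp_zero] at hinv
    rw [expSandwich, ← exp_ofReal_smul_log ha, ← exp_ofReal_smul_log hb,
      ContinuousLinearMap.comp_apply, ContinuousLinearMap.comp_apply, ← mul_apply_eq_comp, hinv,
      one_apply_eq_self]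
  rw [hsandwich]
  have h := norm_expSandwich_le_interp (IsSelfAdjoint.log (a := a)) (IsSelfAdjoint.log (a := b))
    hC₀ hC₁ hT hbT' hlam
  exact (ContinuousLinearMap.le_opNorm _ _).trans <| mul_le_mul_of_nonneg_right h
    (norm_nonneg _)

end StrictlyPositive

section Perturbation

open Filter Topology

variable {H : Type*} [NormedAddCommGroup H] [InnerProductSpace ℂ H]

theorem ContinuousLinearMap.IsPositive.norm_sq_add_sq_le {A : H →L[ℂ] H} (hA : A.IsPositive)
    {δ : ℝ} (hδ : 0 ≤ δ) (v : H) :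
    ‖A v‖ ^ 2 + (δ * ‖v‖) ^ 2 ≤ ‖A v + δ • v‖ ^ 2 := by
  have hcross : 0 ≤ RCLike.re ⟪A v, δ • v⟫_ℂ := by
    rw [← Complex.coe_smul, inner_smul_right]
    simpa using mul_nonneg hδ (hA.re_inner_nonneg_left v)
  rw [@norm_add_sq ℂ, norm_smul, Real.norm_of_nonneg hδ]
  linarith

theorem IsSelfAdjoint.isPositive_of_re_inner_nonneg [CompleteSpace H] {A : H →L[ℂ] H}
    (hA : IsSelfAdjoint A) (h : ∀ x, 0 ≤ (⟪x, A x⟫_ℂ).re) : A.IsPositive :=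
  ⟨hA.isSymmetric, fun x => by
    simpa [ContinuousLinearMap.reApplyInnerSelf, inner_re_symm] using h x⟩

variable {X Y : Type*} [NormedAddCommGroup X] [InnerProductSpace ℂ X]
  [NormedAddCommGroup Y] [InnerProductSpace ℂ Y]

theorem norm_algebraMap_add_apply_le {A : X →L[ℂ] X} {B : Y →L[ℂ] Y} (hA : A.IsPositive)
    {T : X →L[ℂ] Y} {C₀ C₁ : ℝ} (hC₀ : 0 ≤ C₀) (hC₁ : 0 ≤ C₁) (hT : ∀ v, ‖T v‖ ≤ C₀ * ‖v‖)
    (hBT : ∀ v, ‖B (T v)‖ ≤ C₁ * ‖A v‖) {δ : ℝ} (hδ : 0 ≤ δ) (v : X) :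
    ‖(algebraMap ℝ (Y →L[ℂ] Y) (δ ^ 2) + B) (T v)‖ ≤
      (C₁ + δ * C₀) * ‖(algebraMap ℝ (X →L[ℂ] X) δ + A) v‖ := by
  simp only [add_apply, ContinuousLinearMap.algebraMap_apply]
  rw [add_comm (δ • v)]
  have hsq := hA.norm_sq_add_sq_le hδ v
  have hAv : ‖A v‖ ≤ ‖A v + δ • v‖ :=
    pow_le_pow_iff_left₀ (norm_nonneg _) (norm_nonneg _) two_ne_zero |>.1 (by nlinarith)
  have hv : δ * ‖v‖ ≤ ‖A v + δ • v‖ :=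
    pow_le_pow_iff_left₀ (by positivity) (norm_nonneg _) two_ne_zero |>.1 (by nlinarith)
  calc ‖δ ^ 2 • T v + B (T v)‖ ≤ δ ^ 2 * ‖T v‖ + ‖B (T v)‖ := by
        grw [norm_add_le, norm_smul, Real.norm_of_nonneg (by positivity)]
    _ ≤ δ ^ 2 * (C₀ * ‖v‖) + C₁ * ‖A v‖ := by grw [hT, hBT]
    _ = δ * C₀ * (δ * ‖v‖) + C₁ * ‖A v‖ := by ring
    _ ≤ δ * C₀ * ‖A v + δ • v‖ + C₁ * ‖A v + δ • v‖ := by grw [hv, hAv]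
    _ = (C₁ + δ * C₀) * ‖A v + δ • v‖ := by ring

variable [CompleteSpace X] [CompleteSpace Y]

theorem continuous_cfc_algebraMap_add {A : Type*} [CStarAlgebra A] {f : ℝ → ℝ}
    (hf : Continuous f) {a : A} (ha : IsSelfAdjoint a) :
    Continuous fun δ : ℝ => cfc f (algebraMap ℝ A δ + a) :=
  Continuous.cfc_of_mem_nhdsSet f univ_mem (by fun_prop)
    (fun δ => ((IsSelfAdjoint.all δ).algebraMap A).add ha) hf.continuousOn

theorem norm_cfc_rpow_apply_le {A : X →L[ℂ] X} {B : Y →L[ℂ] Y} (hA : A.IsPositive)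
    (hB : B.IsPositive) {T : X →L[ℂ] Y} {C₀ C₁ : ℝ} (hC₀ : 0 ≤ C₀) (hC₁ : 0 ≤ C₁)
    (hT : ∀ v, ‖T v‖ ≤ C₀ * ‖v‖) (hBT : ∀ v, ‖B (T v)‖ ≤ C₁ * ‖A v‖)
    {lam : ℝ} (hlam : lam ∈ Set.Icc (0 : ℝ) 1) (x : X) :
    ‖cfc (fun t : ℝ => t ^ lam) B (T x)‖ ≤
      C₀ ^ (1 - lam) * C₁ ^ lam * ‖cfc (fun t : ℝ => t ^ lam) A x‖ := by
  have hperturbed : ∀ δ : ℝ, 0 < δ →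
      ‖cfc (fun t : ℝ => t ^ lam) (algebraMap ℝ (Y →L[ℂ] Y) (δ ^ 2) + B) (T x)‖ ≤
        C₀ ^ (1 - lam) * (C₁ + δ * C₀) ^ lam *
          ‖cfc (fun t : ℝ => t ^ lam) (algebraMap ℝ (X →L[ℂ] X) δ + A) x‖ := by
    intro δ hδ
    have hAδ : IsStrictlyPositive (algebraMap ℝ (X →L[ℂ] X) δ + A) :=
      (isStrictlyPositive_algebraMap hδ).add_nonneg
        ((ContinuousLinearMap.nonneg_iff_isPositive A).2 hA)
    have hBδ : IsStrictlyPositive (algebraMap ℝ (Y →L[ℂ] Y) (δ ^ 2) + B) :=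
      (isStrictlyPositive_algebraMap (pow_pos hδ 2)).add_nonneg
        ((ContinuousLinearMap.nonneg_iff_isPositive B).2 hB)
    exact norm_cfc_rpow_apply_le_of_isStrictlyPositive hAδ hBδ hC₀ (by positivity) hT
      (norm_algebraMap_add_apply_le hA hC₀ hC₁ hT hBT hδ.le) hlam x
  have hf : Continuous fun t : ℝ => t ^ lam := Real.continuous_rpow_const hlam.1
  have hlhs : Tendsto
      (fun δ : ℝ => ‖cfc (fun t : ℝ => t ^ lam) (algebraMap ℝ (Y →L[ℂ] Y) (δ ^ 2) + B) (T x)‖)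
      (𝓝[>] 0) (𝓝 ‖cfc (fun t : ℝ => t ^ lam) B (T x)‖) := by
    refine (Continuous.tendsto' ?_ 0 _ (by simp)).mono_left nhdsWithin_le_nhds
    exact (((continuous_cfc_algebraMap_add hf hB.isSelfAdjoint).comp (continuous_pow 2)).clm_apply
      continuous_const).norm
  have hrhs : Tendsto (fun δ : ℝ => C₀ ^ (1 - lam) * (C₁ + δ * C₀) ^ lam *
      ‖cfc (fun t : ℝ => t ^ lam) (algebraMap ℝ (X →L[ℂ] X) δ + A) x‖)
      (𝓝[>] 0) (𝓝 (C₀ ^ (1 - lam) * C₁ ^ lam * ‖cfc (fun t : ℝ => t ^ lam) A x‖)) := by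
    refine (Continuous.tendsto' ?_ 0 _ (by simp)).mono_left nhdsWithin_le_nhds
    exact (continuous_const.mul (hf.comp (by fun_prop))).mul
      ((continuous_cfc_algebraMap_add hf hA.isSelfAdjoint).clm_apply continuous_const).norm
  exact le_of_tendsto_of_tendsto hlhs hrhs (eventually_nhdsWithin_of_forall hperturbed)

end Perturbation

/-- STATEMENT 3 (Heinz–Kato inequality), with the fractional powers `A^λ`, `B^λ`
defined via the continuous functional calculus. -/
theorem stmt_3
    {X Y : Type*} [NormedAddCommGroup X] [InnerProductSpace ℂ X] [CompleteSpace X]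
    [NormedAddCommGroup Y] [InnerProductSpace ℂ Y] [CompleteSpace Y]
    (A : X →L[ℂ] X) (B : Y →L[ℂ] Y) (T : X →L[ℂ] Y) (C₀ C₁ : ℝ)
    (hC₀ : 0 ≤ C₀) (hC₁ : 0 ≤ C₁)
    (hA_sa : IsSelfAdjoint A) (hA_pos : ∀ x, 0 ≤ (⟪x, A x⟫_ℂ).re)
    (hB_sa : IsSelfAdjoint B) (hB_pos : ∀ y, 0 ≤ (⟪y, B y⟫_ℂ).re)
    (hT : ∀ x, ‖T x‖ ≤ C₀ * ‖x‖)
    (hBT : ∀ x, ‖B (T x)‖ ≤ C₁ * ‖A x‖) :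
    ∀ lam : ℝ, lam ∈ Set.Icc (0 : ℝ) 1 → ∀ x : X,
      ‖(cfc (fun t : ℝ => t ^ lam) B) (T x)‖ ≤
        C₀ ^ (1 - lam) * C₁ ^ lam * ‖(cfc (fun t : ℝ => t ^ lam) A) x‖ :=
  fun _ hlam x => norm_cfc_rpow_apply_le (hA_sa.isPositive_of_re_inner_nonneg hA_pos)
    (hB_sa.isPositive_of_re_inner_nonneg hB_pos) hC₀ hC₁ hT hBT hlam x
end

section
/- Let H be a Hilbert space and l a closed, densely defined, nonnegative Hermitian sesquilinear form on H with form domain D. Define Dom L = { v ∈ D : ∃ C_v ≥ 0, |l[u,v]| ≤ C_v ‖u‖ for all u ∈ D } and (u | L v) = l[u,v]. Suppose additionally l[u,u] ≥ c‖u‖² for some c > 0. Then L is a self-adjoint operator with L ≥ c, Dom(L^{1/2}) = D, and l[u,v] = (L^{1/2}u | L^{1/2}v) for u,v ∈ D. -/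
/-!
Closedness and coercivity make the form domain `D`, with inner product `l`, a Hilbert space `V`
that embeds continuously, injectively and densely into `H` by a map `J`. The bounded operator
`A = J J†` on `H` is positive and injective with `l[u, A w] = ⟪u, w⟫`, so the operator of the form
is `L = A⁻¹`, and `S = (A^{1/2})⁻¹`; both are self-adjoint as inverses of injective self-adjoint
bounded operators. The one non-formal step is `range A^{1/2} = range J = D`: since
`⟪A^{1/2} y, A^{1/2} z⟫ = ⟪J† y, J† z⟫`, a sequence `y n` makes `A^{1/2} (y n)` Cauchy exactly
when it makes `J† (y n)` Cauchy, which transports limits between the two ranges and also gives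
`⟪S u, S v⟫ = l[u, v]`.
-/

open Filter Topology Function
open scoped InnerProductSpace InnerProduct LinearPMap

namespace LinearMap

variable {R E F : Type*} [Ring R] [AddCommGroup E] [Module R E] [AddCommGroup F] [Module R F]

noncomputable def inversePMap (f : E →ₗ[R] F) : F →ₗ.[R] E := (f.toPMap ⊤).inverse

theorem inversePMap_domain (f : E →ₗ[R] F) : f.inversePMap.domain = range f := by
  rw [inversePMap, LinearPMap.inverse_domain]
  ext y
  simp [LinearMap.toPMap]

variable {f : E →ₗ[R] F}

theorem inversePMap_apply_eq (hf : Injective f) {y : f.inversePMap.domain} {x : E}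
    (h : f x = y) : f.inversePMap y = x :=
  LinearPMap.inverse_apply_eq (f := f.toPMap ⊤) (x := ⟨x, Submodule.mem_top⟩)
    (LinearMap.ker_eq_bot.2 (hf.comp Subtype.val_injective)) h

theorem apply_inversePMap (hf : Injective f) (y : f.inversePMap.domain) :
    f (f.inversePMap y) = y := by
  obtain ⟨x, hx⟩ : (y : F) ∈ range f := f.inversePMap_domain ▸ y.2
  rw [inversePMap_apply_eq hf hx, hx]

theorem inversePMap_surjective (hf : Injective f) : Surjective f.inversePMap := fun x ↦
  ⟨⟨f x, f.inversePMap_domain ▸ mem_range_self f x⟩, inversePMap_apply_eq hf rfl⟩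

theorem inversePMap_apply_of_apply_apply_eq {g : E →ₗ[R] E} (hg : Injective g) {k : E →ₗ[R] E}
    (hgk : ∀ x, g (g x) = k x) (v : k.inversePMap.domain) (h₁ : (v : E) ∈ g.inversePMap.domain)
    (h₂ : g.inversePMap ⟨v, h₁⟩ ∈ g.inversePMap.domain) :
    k.inversePMap v = g.inversePMap ⟨g.inversePMap ⟨v, h₁⟩, h₂⟩ := by
  have hk : Injective k := fun x y h ↦ hg (hg (by rw [hgk, hgk, h]))
  apply hg
  rw [apply_inversePMap hg]
  apply hg
  rw [apply_inversePMap hg, hgk, apply_inversePMap hk]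

end LinearMap

namespace LinearPMap

variable {𝕜 E : Type*} [RCLike 𝕜] [NormedAddCommGroup E] [InnerProductSpace 𝕜 E] [CompleteSpace E]

theorem adjoint_eq_self_of_surjective {A : E →ₗ.[𝕜] E} (hA : Dense (A.domain : Set E))
    (hsymm : A.IsFormalAdjoint A) (hsurj : Surjective A) : A† = A := by
  have hle : A ≤ A† := hsymm.le_adjoint hA
  refine (eq_of_le_of_domain_eq hle (le_antisymm hle.1 fun y hy ↦ ?_)).symm
  obtain ⟨x, hx⟩ := hsurj (A.adjoint ⟨y, hy⟩)
  have horth : ∀ u : A.domain, ⟪A u, y - x⟫_𝕜 = 0 := fun u ↦ by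
    rw [inner_sub_right, hsymm u x, hx, ← (adjoint_isFormalAdjoint hA).symm u ⟨y, hy⟩, sub_self]
  obtain ⟨u, hu⟩ := hsurj (y - x)
  have : y = x := sub_eq_zero.1 (inner_self_eq_zero.1 (hu ▸ horth u))
  exact this ▸ x.2

end LinearPMap

namespace ContinuousLinearMap

variable {𝕜 E F : Type*} [RCLike 𝕜] [NormedAddCommGroup E] [InnerProductSpace 𝕜 E]
  [NormedAddCommGroup F] [InnerProductSpace 𝕜 F] [CompleteSpace E] [CompleteSpace F]

theorem denseRange_of_injective_adjoint {T : E →L[𝕜] F} (hT : Injective (T†)) : DenseRange T := by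
  rw [DenseRange, ← coe_coe, ← LinearMap.coe_range, Submodule.dense_iff_topologicalClosure_eq_top,
    Submodule.topologicalClosure_eq_top_iff, orthogonal_range]
  exact LinearMap.ker_eq_bot.2 hT

theorem injective_adjoint_of_denseRange {T : E →L[𝕜] F} (hT : DenseRange T) : Injective (T†) :=
  (injective_iff_map_eq_zero _).2 fun x hx ↦ hT.eq_zero_of_inner_left 𝕜 fun v ↦ by
    rw [← adjoint_inner_left, hx, inner_zero_left]

theorem mem_range_adjoint_iff {J : E →L[𝕜] F} (hJ : DenseRange J) (x : E) :
    x ∈ Set.range (J†) ↔ ∃ C, 0 ≤ C ∧ ∀ u, ‖⟪u, x⟫_𝕜‖ ≤ C * ‖J u‖ := by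
  constructor
  · rintro ⟨w, rfl⟩
    refine ⟨‖w‖, norm_nonneg w, fun u ↦ ?_⟩
    rw [adjoint_inner_right, mul_comm]
    exact norm_inner_le_norm _ _
  · rintro ⟨C, -, hC⟩
    have hbound : ∃ C, ∀ u, ‖innerₛₗ 𝕜 x u‖ ≤ C * ‖(J : E →ₗ[𝕜] F) u‖ :=
      ⟨C, fun u ↦ by simpa [norm_inner_symm] using hC u⟩
    set φ : F →L[𝕜] 𝕜 := (innerₛₗ 𝕜 x).extendOfNorm (J : E →ₗ[𝕜] F)
    refine ⟨(InnerProductSpace.toDual 𝕜 F).symm φ, ext_inner_right 𝕜 fun u ↦ ?_⟩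
    rw [adjoint_inner_left, InnerProductSpace.toDual_symm_apply]
    exact LinearMap.extendOfNorm_eq hJ hbound u

theorem adjoint_inversePMap {B : E →L[𝕜] E} (hB : IsSelfAdjoint B) (hinj : Injective B) :
    (B : E →ₗ[𝕜] E).inversePMap† = (B : E →ₗ[𝕜] E).inversePMap := by
  refine LinearPMap.adjoint_eq_self_of_surjective ?_ (fun x y ↦ ?_)
    (LinearMap.inversePMap_surjective hinj)
  · rw [LinearMap.inversePMap_domain, LinearMap.coe_range, coe_coe]
    exact denseRange_of_injective_adjoint (by rwa [hB.adjoint_eq])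
  · conv_rhs => rw [← LinearMap.apply_inversePMap hinj x]
    conv_lhs => rw [← LinearMap.apply_inversePMap hinj y]
    exact (hB.isSymmetric _ _).symm

end ContinuousLinearMap

section

variable {𝕜 F G K : Type*} [RCLike 𝕜] [NormedAddCommGroup F] [InnerProductSpace 𝕜 F]
  [NormedAddCommGroup G] [InnerProductSpace 𝕜 G] [CompleteSpace G]
  [NormedAddCommGroup K] [InnerProductSpace 𝕜 K]

theorem exists_seq_tendsto_of_inner_map_eq {P : F →L[𝕜] G} {Q : F →L[𝕜] K}
    (hPQ : ∀ y z, ⟪P y, P z⟫_𝕜 = ⟪Q y, Q z⟫_𝕜) {u : K} (hu : u ∈ closure (Set.range Q)) :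
    ∃ y : ℕ → F, ∃ a : G,
      Tendsto (fun n ↦ Q (y n)) atTop (𝓝 u) ∧ Tendsto (fun n ↦ P (y n)) atTop (𝓝 a) := by
  obtain ⟨q, hq, hqu⟩ := mem_closure_iff_seq_limit.1 hu
  choose y hy using hq
  have hyq : (fun n ↦ Q (y n)) = q := funext hy
  have hdist : ∀ m n, dist (P (y m)) (P (y n)) = dist (Q (y m)) (Q (y n)) := fun m n ↦ by
    rw [dist_eq_norm, dist_eq_norm, ← map_sub, ← map_sub, @norm_eq_sqrt_re_inner 𝕜,
      @norm_eq_sqrt_re_inner 𝕜 K, hPQ]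
  have hQ : CauchySeq fun n ↦ Q (y n) := hyq ▸ hqu.cauchySeq
  obtain ⟨a, ha⟩ := cauchySeq_tendsto_of_complete (Metric.cauchySeq_iff.2 fun ε hε ↦
    (Metric.cauchySeq_iff.1 hQ ε hε).imp fun N hN m hm n hn ↦ (hdist m n).trans_lt (hN m hm n hn))
  exact ⟨y, a, hyq ▸ hqu, ha⟩

end

namespace ContinuousLinearMap

variable {V H : Type*} [NormedAddCommGroup V] [InnerProductSpace ℂ V] [CompleteSpace V]
  [NormedAddCommGroup H] [InnerProductSpace ℂ H] [CompleteSpace H] {J : V →L[ℂ] H}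
  {T : H →L[ℂ] H}

theorem apply_apply_eq_of_mul_self_eq (hTJ : T * T = J ∘L J†) (y : H) : T (T y) = J ((J†) y) :=
  DFunLike.congr_fun hTJ y

theorem inner_apply_eq_inner_adjoint_apply (hT : IsSelfAdjoint T) (hTJ : T * T = J ∘L J†)
    (y z : H) : ⟪T y, T z⟫_ℂ = ⟪(J†) y, (J†) z⟫_ℂ := by
  rw [← adjoint_inner_right, hT.adjoint_eq, apply_apply_eq_of_mul_self_eq hTJ,
    adjoint_inner_left]

theorem injective_of_mul_self_eq (hT : IsSelfAdjoint T) (hTJ : T * T = J ∘L J†)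
    (hJ : DenseRange J) : Injective T :=
  (injective_iff_map_eq_zero _).2 fun x hx ↦ injective_adjoint_of_denseRange hJ <| by
    rw [map_zero, ← inner_self_eq_zero (𝕜 := ℂ), ← inner_apply_eq_inner_adjoint_apply hT hTJ, hx,
      inner_zero_left]

theorem exists_seq_tendsto_of_mul_self_eq (hT : IsSelfAdjoint T) (hTJ : T * T = J ∘L J†)
    (hJinj : Injective J) (u : V) : ∃ y : ℕ → H, ∃ a : H,
      Tendsto (fun n ↦ (J†) (y n)) atTop (𝓝 u) ∧ Tendsto (fun n ↦ T (y n)) atTop (𝓝 a) ∧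
        T a = J u := by
  obtain ⟨y, a, hyu, hya⟩ := exists_seq_tendsto_of_inner_map_eq
    (inner_apply_eq_inner_adjoint_apply hT hTJ)
    (denseRange_of_injective_adjoint (by rwa [adjoint_adjoint]) u)
  refine ⟨y, a, hyu, hya, tendsto_nhds_unique ((T.continuous.tendsto a).comp hya) ?_⟩
  simp_rw [Function.comp_def, apply_apply_eq_of_mul_self_eq hTJ]
  exact (J.continuous.tendsto u).comp hyu

theorem range_eq_of_mul_self_eq (hT : IsSelfAdjoint T) (hTJ : T * T = J ∘L J†)
    (hJinj : Injective J) (hJ : DenseRange J) : Set.range T = Set.range J := by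
  refine subset_antisymm ?_ fun _ ⟨u, hu⟩ ↦ ?_
  · rintro _ ⟨w, rfl⟩
    have hTdense : DenseRange T := denseRange_of_injective_adjoint <| by
      rw [hT.adjoint_eq]
      exact injective_of_mul_self_eq hT hTJ hJ
    obtain ⟨y, u, hyw, hyu⟩ := exists_seq_tendsto_of_inner_map_eq
      (fun y z ↦ (inner_apply_eq_inner_adjoint_apply hT hTJ y z).symm) (hTdense w)
    refine ⟨u, tendsto_nhds_unique ((J.continuous.tendsto u).comp hyu) ?_⟩
    simpa only [Function.comp_def, apply_apply_eq_of_mul_self_eq hTJ] using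
      (T.continuous.tendsto w).comp hyw
  · obtain ⟨y, a, -, -, ha⟩ := exists_seq_tendsto_of_mul_self_eq hT hTJ hJinj u
    exact ⟨a, ha.trans hu⟩

theorem inner_eq_of_apply_eq (hT : IsSelfAdjoint T) (hTJ : T * T = J ∘L J†)
    (hJinj : Injective J) (hJ : DenseRange J) {a b : H} {u v : V} (ha : T a = J u)
    (hb : T b = J v) : ⟪a, b⟫_ℂ = ⟪u, v⟫_ℂ := by
  have hTinj := injective_of_mul_self_eq hT hTJ hJ
  obtain ⟨y, a', hyu, hya, ha'⟩ := exists_seq_tendsto_of_mul_self_eq hT hTJ hJinj u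
  obtain ⟨z, b', hzv, hzb, hb'⟩ := exists_seq_tendsto_of_mul_self_eq hT hTJ hJinj v
  obtain rfl : a' = a := hTinj (ha'.trans ha.symm)
  obtain rfl : b' = b := hTinj (hb'.trans hb.symm)
  refine tendsto_nhds_unique (hya.inner hzb) ?_
  simpa only [inner_apply_eq_inner_adjoint_apply hT hTJ] using hyu.inner (𝕜 := ℂ) hzv

end ContinuousLinearMap

structure ClosedCoerciveForm (H : Type*) [NormedAddCommGroup H] [InnerProductSpace ℂ H] where
  dom : Submodule ℂ H
  dense : Dense (dom : Set H)
  form : H → H → ℂ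
  c : ℝ
  c_pos : 0 < c
  smul_left : ∀ (a : ℂ) (u v : H), u ∈ dom → v ∈ dom → form (a • u) v = star a * form u v
  add_left : ∀ u w v : H, u ∈ dom → w ∈ dom → v ∈ dom → form (u + w) v = form u v + form w v
  conj_symm : ∀ u v : H, u ∈ dom → v ∈ dom → form v u = star (form u v)
  coercive : ∀ u ∈ dom, c * ‖u‖ ^ 2 ≤ (form u u).re
  closed : ∀ (un : ℕ → H), (∀ n, un n ∈ dom) → ∀ x : H, Tendsto un atTop (𝓝 x) →
    (∀ ε : ℝ, 0 < ε → ∃ N : ℕ, ∀ m ≥ N, ∀ n ≥ N, (form (un m - un n) (un m - un n)).re < ε) →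
    x ∈ dom ∧ Tendsto (fun n ↦ (form (un n - x) (un n - x)).re) atTop (𝓝 0)

namespace ClosedCoerciveForm

open ContinuousLinearMap

variable {H : Type*} [NormedAddCommGroup H] [InnerProductSpace ℂ H] (l : ClosedCoerciveForm H)

/-- The form domain, carrying the inner product `l.form` instead of that of `H`. -/
def Space : Type _ := l.dom

instance : AddCommGroup l.Space := inferInstanceAs (AddCommGroup l.dom)

instance : Module ℂ l.Space := inferInstanceAs (Module ℂ l.dom)

def toH : l.Space →ₗ[ℂ] H := l.dom.subtype

def toSpace (x : H) (hx : x ∈ l.dom) : l.Space := ⟨x, hx⟩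

@[simp]
theorem toH_toSpace (x : H) (hx : x ∈ l.dom) : l.toH (l.toSpace x hx) = x := rfl

theorem toH_mem (u : l.Space) : l.toH u ∈ l.dom := Subtype.prop (p := (· ∈ l.dom)) u

theorem toH_injective : Injective l.toH := Subtype.val_injective

theorem coercive_toH (u : l.Space) : l.c * ‖l.toH u‖ ^ 2 ≤ (l.form (l.toH u) (l.toH u)).re :=
  l.coercive _ (l.toH_mem u)

noncomputable abbrev innerProductSpaceCore : InnerProductSpace.Core ℂ l.Space where
  inner u v := l.form (l.toH u) (l.toH v)
  conj_inner_symm u v := (l.conj_symm _ _ (l.toH_mem v) (l.toH_mem u)).symm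
  re_inner_nonneg u := le_trans (by have := l.c_pos; positivity) (l.coercive_toH u)
  add_left u v w := l.add_left _ _ _ (l.toH_mem u) (l.toH_mem v) (l.toH_mem w)
  smul_left u v a := l.smul_left a _ _ (l.toH_mem u) (l.toH_mem v)
  definite u h := by
    have h0 : l.c * ‖l.toH u‖ ^ 2 ≤ 0 := by simpa [h] using l.coercive_toH u
    have h1 : ‖l.toH u‖ ^ 2 ≤ 0 := by nlinarith [l.c_pos]
    exact l.toH_injective (by simpa using h1)

noncomputable instance : NormedAddCommGroup l.Space :=
  l.innerProductSpaceCore.toNormedAddCommGroup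

noncomputable instance : InnerProductSpace ℂ l.Space :=
  InnerProductSpace.ofCore l.innerProductSpaceCore.toCore

theorem inner_def (u v : l.Space) : ⟪u, v⟫_ℂ = l.form (l.toH u) (l.toH v) := rfl

theorem norm_sq_eq (u : l.Space) : ‖u‖ ^ 2 = (l.form (l.toH u) (l.toH u)).re := by
  rw [← inner_def]
  exact norm_sq_eq_re_inner (𝕜 := ℂ) u

theorem norm_toH_le (u : l.Space) : ‖l.toH u‖ ≤ (√l.c)⁻¹ * ‖u‖ := by
  have hc := l.c_pos
  rw [le_inv_mul_iff₀ (by positivity)]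
  refine le_of_sq_le_sq ?_ (norm_nonneg u)
  rw [mul_pow, Real.sq_sqrt hc.le, norm_sq_eq]
  exact l.coercive_toH u

noncomputable def incl : l.Space →L[ℂ] H := l.toH.mkContinuous (√l.c)⁻¹ l.norm_toH_le

instance [CompleteSpace H] : CompleteSpace l.Space := by
  refine Metric.complete_of_cauchySeq_tendsto fun u hu ↦ ?_
  obtain ⟨x, hx⟩ := cauchySeq_tendsto_of_complete (l.incl.uniformContinuous.comp_cauchySeq hu)
  have hdist : ∀ v w : l.Space,
      (l.form (l.toH v - l.toH w) (l.toH v - l.toH w)).re = dist v w ^ 2 := fun v w ↦ by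
    rw [dist_eq_norm, norm_sq_eq, map_sub]
  obtain ⟨hxD, hlim⟩ := l.closed (fun n ↦ l.toH (u n)) (fun n ↦ l.toH_mem _) x hx fun ε hε ↦ by
    obtain ⟨N, hN⟩ := Metric.cauchySeq_iff.1 hu (√ε) (Real.sqrt_pos.2 hε)
    exact ⟨N, fun m hm n hn ↦ by rw [hdist]; exact (Real.lt_sqrt dist_nonneg).1 (hN m hm n hn)⟩
  refine ⟨l.toSpace x hxD, tendsto_iff_dist_tendsto_zero.2 ?_⟩
  have hsq : Tendsto (fun n ↦ dist (u n) (l.toSpace x hxD) ^ 2) atTop (𝓝 0) := by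
    simpa only [← hdist, toH_toSpace] using hlim
  simpa using hsq.sqrt

theorem range_incl : Set.range l.incl = l.dom := Subtype.range_coe

theorem incl_injective : Injective l.incl := l.toH_injective

theorem denseRange_incl : DenseRange l.incl := by
  rw [DenseRange, range_incl]
  exact l.dense

variable [CompleteSpace H]

noncomputable def operator : H →ₗ.[ℂ] H :=
  ((l.incl ∘L l.incl†) : H →ₗ[ℂ] H).inversePMap

noncomputable def sqrtOperator : H →ₗ.[ℂ] H :=
  ((CFC.sqrt (l.incl ∘L l.incl†) : H →L[ℂ] H) : H →ₗ[ℂ] H).inversePMap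

theorem self_comp_adjoint_injective : Injective (l.incl ∘L l.incl†) := by
  rw [coe_comp, self_comp_adjoint_injective_iff]
  exact injective_adjoint_of_denseRange l.denseRange_incl

theorem isPositive_sqrt : (CFC.sqrt (l.incl ∘L l.incl†)).IsPositive :=
  (ContinuousLinearMap.nonneg_iff_isPositive _).1 (CFC.sqrt_nonneg _)

theorem sqrt_mul_sqrt :
    CFC.sqrt (l.incl ∘L l.incl†) * CFC.sqrt (l.incl ∘L l.incl†) = l.incl ∘L l.incl† :=
  CFC.sqrt_mul_sqrt_self _
    ((ContinuousLinearMap.nonneg_iff_isPositive _).2 (isPositive_self_comp_adjoint _))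

theorem sqrt_injective : Injective (CFC.sqrt (l.incl ∘L l.incl†) : H →L[ℂ] H) :=
  injective_of_mul_self_eq l.isPositive_sqrt.isSelfAdjoint l.sqrt_mul_sqrt l.denseRange_incl

theorem mem_operator_domain_iff (v : H) : v ∈ l.operator.domain ↔
    v ∈ l.dom ∧ ∃ C : ℝ, 0 ≤ C ∧ ∀ u ∈ l.dom, ‖l.form u v‖ ≤ C * ‖u‖ := by
  have hdomain : v ∈ l.operator.domain ↔ ∃ x ∈ Set.range (l.incl†), l.incl x = v := by
    simp only [operator, LinearMap.inversePMap_domain, LinearMap.mem_range, coe_coe,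
      Set.exists_range_iff]
    rfl
  rw [hdomain]
  constructor
  · rintro ⟨x, hx, rfl⟩
    obtain ⟨C, hC, hbound⟩ := (mem_range_adjoint_iff l.denseRange_incl x).1 hx
    exact ⟨l.toH_mem x, C, hC, fun u hu ↦ hbound (l.toSpace u hu)⟩
  · rintro ⟨hv, C, hC, hbound⟩
    exact ⟨l.toSpace v hv, (mem_range_adjoint_iff l.denseRange_incl _).2
      ⟨C, hC, fun u ↦ hbound _ (l.toH_mem u)⟩, rfl⟩

theorem operator_adjoint : l.operator† = l.operator :=
  adjoint_inversePMap (isPositive_self_comp_adjoint _).isSelfAdjoint l.self_comp_adjoint_injective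

theorem form_eq_inner_operator (u : H) (hu : u ∈ l.dom) (v : l.operator.domain) :
    l.form u v = ⟪u, l.operator v⟫_ℂ := by
  have hv : l.incl ((l.incl†) (l.operator v)) = v :=
    LinearMap.apply_inversePMap l.self_comp_adjoint_injective v
  conv_lhs => rw [← hv]
  exact adjoint_inner_right l.incl (l.toSpace u hu) (l.operator v)

theorem operator_domain_le : l.operator.domain ≤ l.dom := fun v hv ↦
  ((l.mem_operator_domain_iff v).1 hv).1

theorem coercive_operator (v : l.operator.domain) :
    l.c * ‖(v : H)‖ ^ 2 ≤ (⟪(v : H), l.operator v⟫_ℂ).re := by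
  rw [← l.form_eq_inner_operator _ (l.operator_domain_le v.2)]
  exact l.coercive _ (l.operator_domain_le v.2)

theorem sqrtOperator_domain : l.sqrtOperator.domain = l.dom := by
  rw [sqrtOperator, LinearMap.inversePMap_domain, ← SetLike.coe_set_eq, LinearMap.coe_range,
    coe_coe, range_eq_of_mul_self_eq l.isPositive_sqrt.isSelfAdjoint l.sqrt_mul_sqrt
    l.incl_injective l.denseRange_incl, range_incl]

theorem sqrtOperator_adjoint : l.sqrtOperator† = l.sqrtOperator :=
  adjoint_inversePMap l.isPositive_sqrt.isSelfAdjoint l.sqrt_injective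

theorem re_inner_sqrtOperator_nonneg (u : l.sqrtOperator.domain) :
    0 ≤ (⟪(u : H), l.sqrtOperator u⟫_ℂ).re := by
  rw [← LinearMap.apply_inversePMap l.sqrt_injective u]
  exact l.isPositive_sqrt.re_inner_nonneg_left _

theorem form_eq_inner_sqrtOperator (u v : l.sqrtOperator.domain) :
    l.form u v = ⟪l.sqrtOperator u, l.sqrtOperator v⟫_ℂ := by
  have hu : (u : H) ∈ l.dom := l.sqrtOperator_domain ▸ u.2
  have hv : (v : H) ∈ l.dom := l.sqrtOperator_domain ▸ v.2
  exact (inner_eq_of_apply_eq l.isPositive_sqrt.isSelfAdjoint l.sqrt_mul_sqrt l.incl_injective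
    l.denseRange_incl (u := l.toSpace u hu) (v := l.toSpace v hv)
    (LinearMap.apply_inversePMap l.sqrt_injective u)
    (LinearMap.apply_inversePMap l.sqrt_injective v)).symm

theorem operator_apply_eq_sqrtOperator_sqrtOperator (v : l.operator.domain)
    (h₁ : (v : H) ∈ l.sqrtOperator.domain) (h₂ : l.sqrtOperator ⟨v, h₁⟩ ∈ l.sqrtOperator.domain) :
    l.operator v = l.sqrtOperator ⟨l.sqrtOperator ⟨v, h₁⟩, h₂⟩ :=
  LinearMap.inversePMap_apply_of_apply_apply_eq l.sqrt_injective
    (apply_apply_eq_of_mul_self_eq l.sqrt_mul_sqrt) v h₁ h₂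

end ClosedCoerciveForm

theorem stmt_18_general
    {H : Type*} [NormedAddCommGroup H] [InnerProductSpace ℂ H] [CompleteSpace H]
    (D : Submodule ℂ H) (hD : Dense (D : Set H))
    (l : H → H → ℂ) (c : ℝ) (hc : 0 < c)
    (hsmul₁ : ∀ (a : ℂ) (u v : H), u ∈ D → v ∈ D → l (a • u) v = star a * l u v)
    (hadd₁ : ∀ u w v : H, u ∈ D → w ∈ D → v ∈ D → l (u + w) v = l u v + l w v)
    (hherm : ∀ u v : H, u ∈ D → v ∈ D → l v u = star (l u v))
    (hcoercive : ∀ u ∈ D, c * ‖u‖ ^ 2 ≤ (l u u).re)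
    (hclosed : ∀ (un : ℕ → H), (∀ n, un n ∈ D) → ∀ x : H,
      Tendsto un atTop (nhds x) →
      (∀ ε : ℝ, 0 < ε → ∃ N : ℕ, ∀ m ≥ N, ∀ n ≥ N,
        (l (un m - un n) (un m - un n)).re < ε) →
      x ∈ D ∧ Tendsto (fun n => (l (un n - x) (un n - x)).re) atTop (nhds 0)) :
    ∃ L : H →ₗ.[ℂ] H,
      (∀ v : H, v ∈ L.domain ↔
        (v ∈ D ∧ ∃ C : ℝ, 0 ≤ C ∧ ∀ u ∈ D, ‖l u v‖ ≤ C * ‖u‖)) ∧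
      L.adjoint = L ∧
      (∀ u ∈ D, ∀ v : L.domain, l u (v : H) = ⟪u, L v⟫_ℂ) ∧
      (∀ v : L.domain, c * ‖(v : H)‖ ^ 2 ≤ (⟪(v : H), L v⟫_ℂ).re) ∧
      ∃ S : H →ₗ.[ℂ] H,
        S.domain = D ∧
        S.adjoint = S ∧
        (∀ u : S.domain, 0 ≤ (⟪(u : H), S u⟫_ℂ).re) ∧
        (∀ u v : S.domain, l (u : H) (v : H) = ⟪S u, S v⟫_ℂ) ∧
        (∀ v : L.domain, (v : H) ∈ S.domain) ∧
        (∀ (v : L.domain) (h₁ : (v : H) ∈ S.domain)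
            (h₂ : S ⟨(v : H), h₁⟩ ∈ S.domain),
          L v = S ⟨S ⟨(v : H), h₁⟩, h₂⟩) := by
  let q : ClosedCoerciveForm H := ⟨D, hD, l, c, hc, hsmul₁, hadd₁, hherm, hcoercive, hclosed⟩
  exact ⟨q.operator, q.mem_operator_domain_iff, q.operator_adjoint, q.form_eq_inner_operator,
    q.coercive_operator, q.sqrtOperator, q.sqrtOperator_domain, q.sqrtOperator_adjoint,
    q.re_inner_sqrtOperator_nonneg, q.form_eq_inner_sqrtOperator,
    fun v ↦ q.sqrtOperator_domain ▸ q.operator_domain_le v.2,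
    q.operator_apply_eq_sqrtOperator_sqrtOperator⟩

/-- first representation theorem, coercive case: a closed, densely
defined, Hermitian sesquilinear form `l` on a dense form domain `D` with
`l[u,u] ≥ c‖u‖²`, `c > 0`, is represented by a self-adjoint operator `L ≥ c`
with `Dom L = {v ∈ D : |l[u,v]| ≤ C_v ‖u‖}` and `(u | L v) = l[u,v]`; moreover
`Dom L^{1/2} = D` and `l[u,v] = (L^{1/2}u | L^{1/2}v)`, the square root
`S = L^{1/2}` being a nonnegative self-adjoint operator with `S² ⊇ L`. -/
theorem stmt_18
    {H : Type*} [NormedAddCommGroup H] [InnerProductSpace ℂ H] [CompleteSpace H]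
    (D : Submodule ℂ H) (hD : Dense (D : Set H))
    (l : H → H → ℂ) (c : ℝ) (hc : 0 < c)
    (hsmul₁ : ∀ (a : ℂ) (u v : H), u ∈ D → v ∈ D → l (a • u) v = star a * l u v)
    (hadd₁ : ∀ u w v : H, u ∈ D → w ∈ D → v ∈ D → l (u + w) v = l u v + l w v)
    (hsmul₂ : ∀ (a : ℂ) (u v : H), u ∈ D → v ∈ D → l u (a • v) = a * l u v)
    (hadd₂ : ∀ u v w : H, u ∈ D → v ∈ D → w ∈ D → l u (v + w) = l u v + l u w)
    (hherm : ∀ u v : H, u ∈ D → v ∈ D → l v u = star (l u v))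
    (hcoercive : ∀ u ∈ D, c * ‖u‖ ^ 2 ≤ (l u u).re)
    (hclosed : ∀ (un : ℕ → H), (∀ n, un n ∈ D) → ∀ x : H,
      Tendsto un atTop (nhds x) →
      (∀ ε : ℝ, 0 < ε → ∃ N : ℕ, ∀ m ≥ N, ∀ n ≥ N,
        (l (un m - un n) (un m - un n)).re < ε) →
      x ∈ D ∧ Tendsto (fun n => (l (un n - x) (un n - x)).re) atTop (nhds 0)) :
    ∃ L : H →ₗ.[ℂ] H,
      (∀ v : H, v ∈ L.domain ↔
        (v ∈ D ∧ ∃ C : ℝ, 0 ≤ C ∧ ∀ u ∈ D, ‖l u v‖ ≤ C * ‖u‖)) ∧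
      L.adjoint = L ∧
      (∀ u ∈ D, ∀ v : L.domain, l u (v : H) = ⟪u, L v⟫_ℂ) ∧
      (∀ v : L.domain, c * ‖(v : H)‖ ^ 2 ≤ (⟪(v : H), L v⟫_ℂ).re) ∧
      ∃ S : H →ₗ.[ℂ] H,
        S.domain = D ∧
        S.adjoint = S ∧
        (∀ u : S.domain, 0 ≤ (⟪(u : H), S u⟫_ℂ).re) ∧
        (∀ u v : S.domain, l (u : H) (v : H) = ⟪S u, S v⟫_ℂ) ∧
        (∀ v : L.domain, (v : H) ∈ S.domain) ∧
        (∀ (v : L.domain) (h₁ : (v : H) ∈ S.domain)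
            (h₂ : S ⟨(v : H), h₁⟩ ∈ S.domain),
          L v = S ⟨S ⟨(v : H), h₁⟩, h₂⟩) :=
  stmt_18_general D hD l c hc hsmul₁ hadd₁ hherm hcoercive hclosed
end
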